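/- The ratio Mref₄/M₄ is monotonically decreasing in each prime factor: if d is a cube-free positive integer, p is a prime dividing d with k := v_p(d) ∈ {1,2}, and q is a prime with q > p and q ∤ d, then Mref₄(d)/M₄(d) ≥ Mref₄((d/p^k)·q^k)/M₄((d/p^k)·q^k). -/
import Mathlib


open Real Finset

/-- The lower bound `M(d)` for the mass of a strongly square free quaternary lattice of
determinant `d` (Lemma 3.3(b)). -/
noncomputable def M4 (d : ℕ) : ℝ :=
  (1 / 2160) *
    (∏ p ∈ d.primeFactors.filter fun p => p ≠ 2 ∧ d.factorization p = 2,
      ((1 : ℝ) / 2) * (p : ℝ) ^ 2 * (((p : ℝ) - 1) / ((p : ℝ) + 1))) *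
    (∏ p ∈ d.primeFactors.filter fun p => p ≠ 2 ∧ d.factorization p = 1,
      ((1 : ℝ) / 2) * (p : ℝ) ^ ((3 : ℝ) / 2))

/-- The upper bound `Mref(d)` for the reflective part of the mass of a strongly square free
quaternary lattice of determinant `d` (Lemma 3.5(b)); `Ω` is realised by
`Nat.primeFactorsList.length` and `ω` by `Nat.primeFactors.card`. -/
noncomputable def Mref4 (d : ℕ) : ℝ :=
  3 * (4 : ℝ) ^ d.primeFactorsList.length / 16 +
    2 * (3 : ℝ) ^ d.primeFactorsList.length / 32 +
    (2 : ℝ) ^ d.primeFactorsList.length / 72 +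
    3 * (2 : ℝ) ^ d.primeFactorsList.length / 96 + 53 / 5760 +
    ∑ x ∈ d.divisors,
      (2 : ℝ) ^ (x.primeFactors.card + 1) * (1 / 4) * (2 / π) * (1 + Real.log x / 2) *
        (∏ p ∈ x.primeFactors.filter fun p => d.factorization p = 2,
          (2 * (p : ℝ)) / (2 * (p : ℝ) - 1)) *
        (∏ p ∈ x.primeFactors.filter fun p => d.factorization p = 1,
          ((1 : ℝ) / 2) * Real.sqrt p)



lemma sum_divisors_coprime (f : ℕ → ℝ) {m n : ℕ} (hm : m ≠ 0) (hn : n ≠ 0)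
    (hmn : Nat.Coprime m n) :
    ∑ x ∈ (m * n).divisors, f x = ∑ v ∈ m.divisors, ∑ u ∈ n.divisors, f (v * u) := by
  rw [← Finset.sum_product']
  refine Finset.sum_nbij' (i := fun x : ℕ => (x.gcd m, x.gcd n))
    (j := fun y : ℕ × ℕ => y.1 * y.2) ?_ ?_ ?_ ?_ ?_
  · rintro x hx
    simp only [Finset.mem_product, Nat.mem_divisors]
    exact ⟨⟨Nat.gcd_dvd_right _ _, hm⟩, ⟨Nat.gcd_dvd_right _ _, hn⟩⟩
  · rintro ⟨u, v⟩ h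
    simp only [Finset.mem_product, Nat.mem_divisors] at h
    simp only [Nat.mem_divisors]
    exact ⟨Nat.mul_dvd_mul h.1.1 h.2.1, mul_ne_zero hm hn⟩
  · rintro x hx
    simp only [Nat.mem_divisors] at hx
    exact (Nat.gcd_mul_gcd_eq_iff_dvd_mul_of_coprime hmn).2 hx.1
  · rintro ⟨u, v⟩ h
    simp only [Finset.mem_product, Nat.mem_divisors] at h
    have hu : u ∣ m := h.1.1
    have hv : v ∣ n := h.2.1
    have hvm : Nat.Coprime v m := Nat.Coprime.coprime_dvd_left hv hmn.symm
    have hun : Nat.Coprime u n := Nat.Coprime.coprime_dvd_left hu hmn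
    have h1 : (u * v).gcd m = u := by
      rw [Nat.Coprime.gcd_mul_right_cancel u hvm]
      exact Nat.gcd_eq_left hu
    have h2 : (u * v).gcd n = v := by
      rw [mul_comm, Nat.Coprime.gcd_mul_right_cancel v hun]
      exact Nat.gcd_eq_left hv
    simp [h1, h2]
  · rintro x hx
    simp only [Nat.mem_divisors] at hx
    rw [(Nat.gcd_mul_gcd_eq_iff_dvd_mul_of_coprime hmn).2 hx.1]

lemma fact_mul_left {a b r : ℕ} (hab : Nat.Coprime a b) (hr : r ∈ a.primeFactors) :
    (a * b).factorization r = a.factorization r := by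
  rw [Nat.factorization_mul_apply_of_coprime hab]
  have hrb : ¬ r ∣ b := by
    intro h
    have h1 : r ∣ Nat.gcd a b := Nat.dvd_gcd (Nat.dvd_of_mem_primeFactors hr) h
    rw [hab] at h1
    exact (Nat.prime_of_mem_primeFactors hr).one_lt.ne' (Nat.dvd_one.1 h1)
  rw [Nat.factorization_eq_zero_of_not_dvd hrb, add_zero]

lemma M4_mul {a b : ℕ} (ha : a ≠ 0) (hb : b ≠ 0) (hab : a.Coprime b) :
    M4 (a * b) = 2160 * M4 a * M4 b := by
  have key : ∀ c : ℕ,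
      Finset.filter (fun r => r ≠ 2 ∧ (a * b).factorization r = c) (a * b).primeFactors
        = Finset.filter (fun r => r ≠ 2 ∧ a.factorization r = c) a.primeFactors
          ∪ Finset.filter (fun r => r ≠ 2 ∧ b.factorization r = c) b.primeFactors := by
    intro c
    rw [Nat.primeFactors_mul ha hb, Finset.filter_union]
    congr 1
    · refine Finset.filter_congr fun r hr => ?_
      rw [fact_mul_left hab hr]
    · refine Finset.filter_congr fun r hr => ?_
      rw [mul_comm a b, fact_mul_left hab.symm hr]
  have hdisj := hab.disjoint_primeFactors
  unfold M4
  rw [key 2, key 1, Finset.prod_union (Finset.disjoint_filter_filter hdisj),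
    Finset.prod_union (Finset.disjoint_filter_filter hdisj)]
  ring

lemma M4_two_pow (k : ℕ) : M4 (2 ^ k) = 1 / 2160 := by
  rcases Nat.eq_zero_or_pos k with hk | hk
  · subst hk; simp [M4]
  have h1 : (2 ^ k : ℕ).primeFactors = {2} :=
    Nat.primeFactors_prime_pow hk.ne' Nat.prime_two
  unfold M4
  rw [h1]
  rw [Finset.filter_singleton, Finset.filter_singleton]
  simp

lemma M4_odd_one {r : ℕ} (hr : r.Prime) (h2 : r ≠ 2) :
    M4 (r ^ 1) = (1 / 2160) * ((1 : ℝ) / 2 * (r : ℝ) ^ ((3 : ℝ) / 2)) := by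
  have h1 : (r ^ 1 : ℕ).primeFactors = {r} := Nat.primeFactors_prime_pow one_ne_zero hr
  have h2' : (r ^ 1 : ℕ).factorization r = 1 := by
    rw [Nat.Prime.factorization_pow hr]; simp
  unfold M4
  rw [h1, Finset.filter_singleton, Finset.filter_singleton]
  rw [if_neg (fun hh => by rw [h2'] at hh; omega), if_pos ⟨h2, h2'⟩]
  simp

lemma M4_odd_two {r : ℕ} (hr : r.Prime) (h2 : r ≠ 2) :
    M4 (r ^ 2) = (1 / 2160) * ((1 : ℝ) / 2 * (r : ℝ) ^ 2 * (((r : ℝ) - 1) / ((r : ℝ) + 1))) := by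
  have h1 : (r ^ 2 : ℕ).primeFactors = {r} := Nat.primeFactors_prime_pow two_ne_zero hr
  have h2' : (r ^ 2 : ℕ).factorization r = 2 := by
    rw [Nat.Prime.factorization_pow hr]; simp
  unfold M4
  rw [h1, Finset.filter_singleton, Finset.filter_singleton]
  rw [if_pos ⟨h2, h2'⟩, if_neg (fun hh => by rw [h2'] at hh; omega)]
  simp

lemma len_mul_pow {m r : ℕ} (hm : m ≠ 0) (hr : r.Prime) (k : ℕ) :
    (m * r ^ k).primeFactorsList.length = m.primeFactorsList.length + k := by
  have h1 := ArithmeticFunction.cardFactors_mul hm (pow_ne_zero k hr.pos.ne')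
  have h2 := ArithmeticFunction.cardFactors_apply_prime_pow (k := k) hr
  simp only [ArithmeticFunction.cardFactors_apply] at h1 h2
  omega

lemma sqrt_ge_one {b : ℝ} (hb : 1 ≤ b) : 1 ≤ Real.sqrt b := by
  rw [show (1:ℝ) = Real.sqrt 1 by rw [Real.sqrt_one]]
  exact Real.sqrt_le_sqrt hb

lemma num_k1_odd {a b : ℝ} (ha : 2 ≤ a) (hab : a + 1 ≤ b) :
    (b/a) * (1/2 * Real.sqrt b) * (1/2 * (a * Real.sqrt a))
      ≤ (1/2 * Real.sqrt a) * (1/2 * (b * Real.sqrt b)) := by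
  have ha0 : a ≠ 0 := by linarith
  have heq : (b/a) * (1/2 * Real.sqrt b) * (1/2 * (a * Real.sqrt a))
      = (1/2 * Real.sqrt a) * (1/2 * (b * Real.sqrt b)) := by
    field_simp
  exact le_of_eq heq

lemma num_k1_two {b : ℝ} (hb : 3 ≤ b) :
    (b/2) * (1/2 * Real.sqrt b) * 1 ≤ (1/2 * Real.sqrt 2) * (1/2 * (b * Real.sqrt b)) := by
  have h1 : 1 ≤ Real.sqrt 2 := sqrt_ge_one (by norm_num)
  have h2 : 0 ≤ b * Real.sqrt b := by positivity
  nlinarith [mul_nonneg (sub_nonneg.2 h1) h2]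

lemma num_k2_odd {a b : ℝ} (ha : 2 ≤ a) (hab : a + 1 ≤ b) :
    (b/a)^2 * (2*b/(2*b-1)) * (1/2 * a^2 * ((a-1)/(a+1)))
      ≤ (2*a/(2*a-1)) * (1/2 * b^2 * ((b-1)/(b+1))) := by
  have h1 : (0:ℝ) < a := by linarith
  have h2 : (0:ℝ) < 2*b-1 := by linarith
  have h3 : (0:ℝ) < a+1 := by linarith
  have h4 : (0:ℝ) < 2*a-1 := by linarith
  have h5 : (0:ℝ) < b+1 := by linarith
  have key : b*(a-1)*(b+1)*(2*a-1) ≤ a*(b-1)*(a+1)*(2*b-1) := by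
    nlinarith [mul_nonneg (show (0:ℝ) ≤ b - a by linarith)
      (show (0:ℝ) ≤ 5*a*b - a - b - 1 by nlinarith)]
  have eq1 : (b/a)^2 * (2*b/(2*b-1)) * (1/2 * a^2 * ((a-1)/(a+1)))
      = (b^2*b*(a-1)) / ((2*b-1)*(a+1)) := by
    field_simp
  have eq2 : (2*a/(2*a-1)) * (1/2 * b^2 * ((b-1)/(b+1)))
      = (a*b^2*(b-1)) / ((2*a-1)*(b+1)) := by
    field_simp
  rw [eq1, eq2, div_le_div_iff₀ (by positivity) (by positivity)]
  nlinarith [mul_le_mul_of_nonneg_left key (sq_nonneg b)]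

lemma num_k2_two {b : ℝ} (hb : 3 ≤ b) :
    (b/2)^2 * (2*b/(2*b-1)) * 1 ≤ (2*2/(2*2-1)) * (1/2 * b^2 * ((b-1)/(b+1))) := by
  have h2 : (0:ℝ) < 2*b-1 := by linarith
  have h5 : (0:ℝ) < b+1 := by linarith
  have eq1 : (b/2)^2 * (2*b/(2*b-1)) * 1 = (b^2*b) / (2*(2*b-1)) := by
    field_simp
  have eq2 : (2*2/(2*2-1 : ℝ)) * (1/2 * b^2 * ((b-1)/(b+1))) = (2*b^2*(b-1)) / (3*(b+1)) := by
    field_simp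
    ring
  rw [eq1, eq2, div_le_div_iff₀ (by positivity) (by positivity)]
  nlinarith [mul_le_mul_of_nonneg_left (show 3*(b+1) ≤ 4*(b-1)*(2*b-1) by nlinarith)
    (sq_nonneg b)]

lemma gle_k1_odd {a b : ℝ} (ha : 0 ≤ a) (hab : a ≤ b) :
    1/2 * (a * Real.sqrt a) ≤ 1/2 * (b * Real.sqrt b) := by
  have := Real.sqrt_le_sqrt hab
  nlinarith [Real.sqrt_nonneg a, Real.sqrt_nonneg b]

lemma gle_k1_two {b : ℝ} (hb : 3 ≤ b) : (1:ℝ) ≤ 1/2 * (b * Real.sqrt b) := by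
  have h1 : 1 ≤ Real.sqrt b := sqrt_ge_one (by linarith)
  nlinarith

lemma gle_k2_odd {a b : ℝ} (ha : 2 ≤ a) (hab : a ≤ b) :
    1/2 * a^2 * ((a-1)/(a+1)) ≤ 1/2 * b^2 * ((b-1)/(b+1)) := by
  have h3 : (0:ℝ) < a+1 := by linarith
  have h5 : (0:ℝ) < b+1 := by linarith
  rw [show (1/2:ℝ)*a^2*((a-1)/(a+1)) = (a^2*(a-1))/(2*(a+1)) by field_simp; try ring,
    show (1/2:ℝ)*b^2*((b-1)/(b+1)) = (b^2*(b-1))/(2*(b+1)) by field_simp; try ring,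
    div_le_div_iff₀ (by positivity) (by positivity)]
  nlinarith [mul_nonneg (show (0:ℝ) ≤ b - a by linarith)
    (show (0:ℝ) ≤ a*b*(a+b) + a^2 + b^2 - a - b by nlinarith)]

lemma gle_k2_two {b : ℝ} (hb : 3 ≤ b) : (1:ℝ) ≤ 1/2 * b^2 * ((b-1)/(b+1)) := by
  have h5 : (0:ℝ) < b+1 := by linarith
  rw [show (1/2 : ℝ) * b^2 * ((b-1)/(b+1)) = (b^2*(b-1))/(2*(b+1)) by field_simp; try ring,
    le_div_iff₀ (by positivity)]
  nlinarith

lemma step1 {L la lb t : ℝ} (hL : 0 ≤ L) (hla : 0 ≤ la) (hd : lb - la ≤ t - 1) (ht : 1 ≤ t)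
    {i : ℕ} (hi : i = 1 ∨ i = 2) :
    1 + (L + i*lb)/2 ≤ (1 + (L + i*la)/2) * t^i := by
  rcases hi with rfl | rfl
  · push_cast
    nlinarith [mul_nonneg (show (0:ℝ) ≤ (L + la)/2 by positivity)
      (show (0:ℝ) ≤ t - 1 by linarith)]
  · push_cast
    nlinarith [mul_nonneg (show (0:ℝ) ≤ (L + 2*la)/2 by positivity)
      (show (0:ℝ) ≤ t^2 - 1 by nlinarith),
      mul_nonneg (show (0:ℝ) ≤ t - 1 by linarith) (show (0:ℝ) ≤ t - 1 by linarith)]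

lemma rpow_three_halves {x : ℝ} (hx : 0 ≤ x) : x ^ ((3:ℝ)/2) = x * Real.sqrt x := by
  rcases eq_or_lt_of_le hx with h | h
  · rw [← h, Real.zero_rpow (by norm_num), Real.sqrt_zero, mul_zero]
  · rw [Real.sqrt_eq_rpow, show (3:ℝ)/2 = 1 + 1/2 by norm_num, Real.rpow_add h, Real.rpow_one]

lemma G_two (k : ℕ) : 2160 * M4 (2 ^ k) = 1 := by rw [M4_two_pow]; norm_num

lemma G1_odd {r : ℕ} (hr : r.Prime) (h2 : r ≠ 2) :
    2160 * M4 (r ^ 1) = 1/2 * ((r:ℝ) * Real.sqrt (r:ℝ)) := by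
  rw [M4_odd_one hr h2, rpow_three_halves (by positivity)]
  ring

lemma G2_odd {r : ℕ} (hr : r.Prime) (h2 : r ≠ 2) :
    2160 * M4 (r ^ 2) = 1/2 * (r:ℝ)^2 * (((r:ℝ)-1)/((r:ℝ)+1)) := by
  rw [M4_odd_two hr h2]
  ring

lemma M4_pos (d : ℕ) : 0 < M4 d := by
  unfold M4
  refine mul_pos (mul_pos (by norm_num) (Finset.prod_pos ?_)) (Finset.prod_pos ?_) <;>
    intro r hr <;> rw [Finset.mem_filter] at hr
  · have hrp := Nat.prime_of_mem_primeFactors hr.1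
    have hr3 : 3 ≤ r := by
      rcases hrp.eq_two_or_odd with h | h
      · exact absurd h hr.2.1
      · have := hrp.two_le; omega
    have hr3' : (3:ℝ) ≤ (r:ℝ) := by exact_mod_cast hr3
    refine mul_pos (mul_pos (by norm_num) (by positivity)) (div_pos (by linarith) (by linarith))
  · have hrp := Nat.prime_of_mem_primeFactors hr.1
    have : (0:ℝ) < r := by exact_mod_cast hrp.pos
    positivity

lemma core {p q : ℕ} (hp : p.Prime) (hq : q.Prime) (hpq : p < q) {k i : ℕ}
    (hk : k = 1 ∨ k = 2) (hik : i ≤ k) {L : ℝ} (hL : 0 ≤ L) :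
    (1 + (L + (i:ℝ) * Real.log (q:ℝ)) / 2) *
      ((if i ≠ 0 ∧ k = 2 then 2 * (q:ℝ) / (2 * (q:ℝ) - 1) else 1) *
       (if i ≠ 0 ∧ k = 1 then 1 / 2 * Real.sqrt (q:ℝ) else 1)) * (2160 * M4 (p ^ k))
  ≤ (1 + (L + (i:ℝ) * Real.log (p:ℝ)) / 2) *
      ((if i ≠ 0 ∧ k = 2 then 2 * (p:ℝ) / (2 * (p:ℝ) - 1) else 1) *
       (if i ≠ 0 ∧ k = 1 then 1 / 2 * Real.sqrt (p:ℝ) else 1)) * (2160 * M4 (q ^ k)) := by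
  have hq3 : 3 ≤ q := by have := hp.two_le; omega
  have hq2 : q ≠ 2 := by omega
  have hb3 : (3:ℝ) ≤ (q:ℝ) := by exact_mod_cast hq3
  have ha2 : (2:ℝ) ≤ (p:ℝ) := by exact_mod_cast hp.two_le
  have hab : (p:ℝ) + 1 ≤ (q:ℝ) := by exact_mod_cast hpq
  have ha0 : (0:ℝ) < (p:ℝ) := by linarith
  have hb0 : (0:ℝ) < (q:ℝ) := by linarith
  -- Gp ≤ Gq, Gp, Gq > 0
  have hGle : 2160 * M4 (p ^ k) ≤ 2160 * M4 (q ^ k) := by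
    rcases hk with rfl | rfl <;> by_cases hp2 : p = 2
    · rw [hp2, G_two, G1_odd hq hq2]; exact gle_k1_two hb3
    · rw [G1_odd hp hp2, G1_odd hq hq2]; exact gle_k1_odd (by positivity) (by linarith)
    · rw [hp2, G_two, G2_odd hq hq2]; exact gle_k2_two hb3
    · rw [G2_odd hp hp2, G2_odd hq hq2]; exact gle_k2_odd ha2 (by linarith)
  have hGp0 : 0 < 2160 * M4 (p ^ k) := by have := M4_pos (p ^ k); linarith
  have hGq0 : 0 < 2160 * M4 (q ^ k) := by have := M4_pos (q ^ k); linarith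
  rcases eq_or_ne i 0 with rfl | hi0
  · simp only [ne_eq, not_true_eq_false, false_and, if_false, Nat.cast_zero, zero_mul,
      add_zero, mul_one]
    exact mul_le_mul_of_nonneg_left hGle (by linarith)
  · have hla : 0 ≤ Real.log (p:ℝ) := Real.log_nonneg (by linarith)
    have hdiff : Real.log (q:ℝ) - Real.log (p:ℝ) ≤ (q:ℝ)/(p:ℝ) - 1 := by
      have h := Real.log_le_sub_one_of_pos (show (0:ℝ) < (q:ℝ)/(p:ℝ) by positivity)
      rw [Real.log_div hb0.ne' ha0.ne'] at h; linarith
    have ht1 : 1 ≤ (q:ℝ)/(p:ℝ) := by rw [le_div_iff₀ ha0]; linarith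
    have hi12 : i = 1 ∨ i = 2 := by omega
    have hs1 := step1 hL hla hdiff ht1 hi12
    have hSpos : (0:ℝ) ≤ 1 + (L + (i:ℝ)*Real.log (p:ℝ))/2 := by positivity
    -- numeric core
    have hnum : ((q:ℝ)/(p:ℝ))^i *
        ((if i ≠ 0 ∧ k = 2 then 2 * (q:ℝ) / (2 * (q:ℝ) - 1) else 1) *
         (if i ≠ 0 ∧ k = 1 then 1 / 2 * Real.sqrt (q:ℝ) else 1)) * (2160 * M4 (p ^ k))
      ≤ ((if i ≠ 0 ∧ k = 2 then 2 * (p:ℝ) / (2 * (p:ℝ) - 1) else 1) *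
         (if i ≠ 0 ∧ k = 1 then 1 / 2 * Real.sqrt (p:ℝ) else 1)) * (2160 * M4 (q ^ k)) := by
      rcases hk with rfl | rfl
      · have hi1 : i = 1 := by omega
        subst hi1
        have hC2 : ¬((1:ℕ) ≠ 0 ∧ (1:ℕ) = 2) := by norm_num
        have hC1 : ((1:ℕ) ≠ 0 ∧ (1:ℕ) = 1) := by norm_num
        rw [if_neg hC2, if_neg hC2, if_pos hC1, if_pos hC1, pow_one]
        by_cases hp2 : p = 2
        · rw [hp2, G_two, G1_odd hq hq2]
          have h2 : ((2:ℕ):ℝ) = 2 := by norm_num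
          rw [h2]
          nlinarith [num_k1_two hb3]
        · rw [G1_odd hp hp2, G1_odd hq hq2]
          nlinarith [num_k1_odd ha2 hab]
      · have hq2b : (0:ℝ) < 2*(q:ℝ)-1 := by linarith
        have hC2 : (i ≠ 0 ∧ (2:ℕ) = 2) := ⟨hi0, rfl⟩
        have hC1 : ¬(i ≠ 0 ∧ (2:ℕ) = 1) := by simp
        have hXq : (0:ℝ) ≤ (if i ≠ 0 ∧ 2 = 2 then 2 * (q:ℝ) / (2 * (q:ℝ) - 1) else 1) *
            (if i ≠ 0 ∧ 2 = 1 then 1 / 2 * Real.sqrt (q:ℝ) else 1) := by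
          rw [if_pos hC2, if_neg hC1]
          positivity
        have hpow : ((q:ℝ)/(p:ℝ))^i ≤ ((q:ℝ)/(p:ℝ))^2 :=
          pow_le_pow_right₀ ht1 (by omega)
        have hmain : ((q:ℝ)/(p:ℝ))^2 *
            ((if i ≠ 0 ∧ 2 = 2 then 2 * (q:ℝ) / (2 * (q:ℝ) - 1) else 1) *
             (if i ≠ 0 ∧ 2 = 1 then 1 / 2 * Real.sqrt (q:ℝ) else 1)) * (2160 * M4 (p ^ 2))
          ≤ ((if i ≠ 0 ∧ 2 = 2 then 2 * (p:ℝ) / (2 * (p:ℝ) - 1) else 1) *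
             (if i ≠ 0 ∧ 2 = 1 then 1 / 2 * Real.sqrt (p:ℝ) else 1)) * (2160 * M4 (q ^ 2)) := by
          rw [if_pos hC2, if_pos hC2, if_neg hC1, if_neg hC1, mul_one, mul_one]
          by_cases hp2 : p = 2
          · rw [hp2, G_two, G2_odd hq hq2]
            have h2 : ((2:ℕ):ℝ) = 2 := by norm_num
            rw [h2]
            nlinarith [num_k2_two hb3]
          · rw [G2_odd hp hp2, G2_odd hq hq2]
            nlinarith [num_k2_odd ha2 hab]
        calc ((q:ℝ)/(p:ℝ))^i * _ * (2160 * M4 (p ^ 2))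
            ≤ ((q:ℝ)/(p:ℝ))^2 * _ * (2160 * M4 (p ^ 2)) := by
              exact mul_le_mul_of_nonneg_right
                (mul_le_mul_of_nonneg_right hpow hXq) hGp0.le
          _ ≤ _ := hmain
    calc (1 + (L + (i:ℝ) * Real.log (q:ℝ)) / 2) *
          ((if i ≠ 0 ∧ k = 2 then 2 * (q:ℝ) / (2 * (q:ℝ) - 1) else 1) *
           (if i ≠ 0 ∧ k = 1 then 1 / 2 * Real.sqrt (q:ℝ) else 1)) * (2160 * M4 (p ^ k))
        ≤ ((1 + (L + (i:ℝ) * Real.log (p:ℝ)) / 2) * ((q:ℝ)/(p:ℝ))^i) *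
          ((if i ≠ 0 ∧ k = 2 then 2 * (q:ℝ) / (2 * (q:ℝ) - 1) else 1) *
           (if i ≠ 0 ∧ k = 1 then 1 / 2 * Real.sqrt (q:ℝ) else 1)) * (2160 * M4 (p ^ k)) := by
          refine mul_le_mul_of_nonneg_right (mul_le_mul_of_nonneg_right hs1 ?_) hGp0.le
          rcases hk with rfl | rfl
          · rw [if_neg (show ¬(i ≠ 0 ∧ (1:ℕ) = 2) by simp), if_pos (⟨hi0, rfl⟩ : i ≠ 0 ∧ (1:ℕ) = 1)]
            positivity
          · rw [if_pos (⟨hi0, rfl⟩ : i ≠ 0 ∧ (2:ℕ) = 2), if_neg (show ¬(i ≠ 0 ∧ (2:ℕ) = 1) by simp)]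
            have : (0:ℝ) < 2*(q:ℝ)-1 := by linarith
            positivity
      _ = (1 + (L + (i:ℝ) * Real.log (p:ℝ)) / 2) * (((q:ℝ)/(p:ℝ))^i *
          ((if i ≠ 0 ∧ k = 2 then 2 * (q:ℝ) / (2 * (q:ℝ) - 1) else 1) *
           (if i ≠ 0 ∧ k = 1 then 1 / 2 * Real.sqrt (q:ℝ) else 1)) * (2160 * M4 (p ^ k))) := by
          ring
      _ ≤ (1 + (L + (i:ℝ) * Real.log (p:ℝ)) / 2) *
          (((if i ≠ 0 ∧ k = 2 then 2 * (p:ℝ) / (2 * (p:ℝ) - 1) else 1) *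
           (if i ≠ 0 ∧ k = 1 then 1 / 2 * Real.sqrt (p:ℝ) else 1)) * (2160 * M4 (q ^ k))) :=
          mul_le_mul_of_nonneg_left hnum hSpos
      _ = _ := by ring

lemma card_pf {v r i : ℕ} (hv : v ≠ 0) (hr : r.Prime) (hrv : ¬ r ∣ v) :
    (v * r ^ i).primeFactors.card = v.primeFactors.card + (if i = 0 then 0 else 1) := by
  rcases eq_or_ne i 0 with hi | hi
  · simp [hi]
  · rw [Nat.primeFactors_mul hv (pow_ne_zero _ hr.pos.ne'),
      Nat.primeFactors_prime_pow hi hr, Finset.union_comm, ← Finset.insert_eq,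
      Finset.card_insert_of_notMem (fun h => hrv (Nat.dvd_of_mem_primeFactors h))]
    simp [hi]

lemma term_expand {m r v : ℕ} (hr : r.Prime) (hm : m ≠ 0) (hrm : ¬ r ∣ m) (hv : v ∣ m)
    (k i c : ℕ) (f : ℕ → ℝ) :
    ∏ s ∈ (v * r ^ i).primeFactors.filter (fun s => (m * r ^ k).factorization s = c), f s
      = (∏ s ∈ v.primeFactors.filter (fun s => m.factorization s = c), f s)
        * (if i ≠ 0 ∧ k = c then f r else 1) := by
  have hv0 : v ≠ 0 := fun h => hm (Nat.eq_zero_of_zero_dvd (h ▸ hv))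
  have hrv : ¬ r ∣ v := fun h => hrm (h.trans hv)
  have hcop : Nat.Coprime m (r ^ k) :=
    (((Nat.Prime.coprime_iff_not_dvd hr).mpr hrm).symm).pow_right k
  have hfv : ∀ s ∈ v.primeFactors, (m * r ^ k).factorization s = m.factorization s := by
    intro s hs
    have hsm : s ∈ m.primeFactors :=
      Nat.mem_primeFactors.2 ⟨Nat.prime_of_mem_primeFactors hs,
        (Nat.dvd_of_mem_primeFactors hs).trans hv, hm⟩
    exact fact_mul_left hcop hsm
  have hfr : (m * r ^ k).factorization r = k := by
    rw [Nat.factorization_mul_apply_of_coprime hcop,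
      Nat.factorization_eq_zero_of_not_dvd hrm, Nat.Prime.factorization_pow hr]
    simp
  have hcongr : Finset.filter (fun s => (m * r ^ k).factorization s = c) v.primeFactors
      = Finset.filter (fun s => m.factorization s = c) v.primeFactors :=
    Finset.filter_congr fun s hs => by rw [hfv s hs]
  rcases eq_or_ne i 0 with hi | hi
  · subst hi
    rw [pow_zero, mul_one, if_neg (by simp), mul_one, hcongr]
  · rw [Nat.primeFactors_mul hv0 (pow_ne_zero _ hr.pos.ne'),
      Nat.primeFactors_prime_pow hi hr, Finset.union_comm, ← Finset.insert_eq,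
      Finset.filter_insert]
    have hrnot : r ∉ Finset.filter (fun s => m.factorization s = c) v.primeFactors :=
      fun h => hrv (Nat.dvd_of_mem_primeFactors (Finset.mem_of_mem_filter r h))
    by_cases hkc : k = c
    · rw [if_pos (by rw [hfr]; exact hkc), hcongr, Finset.prod_insert hrnot,
        if_pos ⟨hi, hkc⟩]
      ring
    · rw [if_neg (by rw [hfr]; exact hkc), hcongr, if_neg (by tauto), mul_one]



lemma key_combine {C Sq Sp Gp Gq : ℝ} (hC : 0 ≤ C) (hG : Gp ≤ Gq) (hS : Sq * Gp ≤ Sp * Gq) :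
    (C + Sq) * Gp ≤ (C + Sp) * Gq := by
  nlinarith [mul_le_mul_of_nonneg_left hG hC]

lemma G_mono {p q : ℕ} (hp : p.Prime) (hq : q.Prime) (hpq : p < q) {k : ℕ}
    (hk : k = 1 ∨ k = 2) : 2160 * M4 (p ^ k) ≤ 2160 * M4 (q ^ k) := by
  have hq3 : 3 ≤ q := by have := hp.two_le; omega
  have hq2 : q ≠ 2 := by omega
  have hb3 : (3:ℝ) ≤ (q:ℝ) := by exact_mod_cast hq3
  have ha2 : (2:ℝ) ≤ (p:ℝ) := by exact_mod_cast hp.two_le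
  have hab : (p:ℝ) + 1 ≤ (q:ℝ) := by exact_mod_cast hpq
  rcases hk with rfl | rfl <;> by_cases hp2 : p = 2
  · rw [hp2, G_two, G1_odd hq hq2]; exact gle_k1_two hb3
  · rw [G1_odd hp hp2, G1_odd hq hq2]; exact gle_k1_odd (by positivity) (by linarith)
  · rw [hp2, G_two, G2_odd hq hq2]; exact gle_k2_two hb3
  · rw [G2_odd hp hp2, G2_odd hq hq2]; exact gle_k2_odd ha2 (by linarith)

/-- Lemma 3.7 in dimension 4: the ratio `Mref/M` is monotonically decreasing in each prime
factor of the determinant (`k = v_p(d) ∈ {1, 2}`). -/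
theorem ratio_mono_dim4 (d : ℕ) (hd : 0 < d)
    (hcf : ∀ p : ℕ, p.Prime → d.factorization p ≤ 2)
    (p : ℕ) (hp : p.Prime) (hpd : p ∣ d) (k : ℕ) (hk : k = 1 ∨ k = 2)
    (hkp : d.factorization p = k) (q : ℕ) (hq : q.Prime) (hpq : p < q) (hqd : ¬ q ∣ d) :
    Mref4 (d / p ^ k * q ^ k) / M4 (d / p ^ k * q ^ k) ≤ Mref4 d / M4 d := by
  have hk0 : k ≠ 0 := by omega
  have hd0 : d ≠ 0 := hd.ne'
  have hpk : p ^ k ∣ d := by rw [← hkp]; exact Nat.ordProj_dvd d p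
  set m := d / p ^ k with hm_def
  have hdm : d = m * p ^ k := (Nat.div_mul_cancel hpk).symm
  have hm0 : m ≠ 0 := by
    intro h
    rw [h, zero_mul] at hdm
    exact hd0 hdm
  have hpm : ¬ p ∣ m := by
    have h := Nat.not_dvd_ordCompl hp hd0
    rw [hkp] at h
    exact h
  have hqm : ¬ q ∣ m := fun h => hqd (h.trans ⟨p ^ k, hdm⟩)
  have hcopp : Nat.Coprime m (p ^ k) := (((hp.coprime_iff_not_dvd).mpr hpm).symm).pow_right k
  have hcopq : Nat.Coprime m (q ^ k) := (((hq.coprime_iff_not_dvd).mpr hqm).symm).pow_right k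
  have hpk0 : p ^ k ≠ 0 := pow_ne_zero _ hp.pos.ne'
  have hqk0 : q ^ k ≠ 0 := pow_ne_zero _ hq.pos.ne'
  have hMd : M4 d = 2160 * M4 m * M4 (p ^ k) := by
    rw [hdm]; exact M4_mul hm0 hpk0 hcopp
  have hMd' : M4 (m * q ^ k) = 2160 * M4 m * M4 (q ^ k) := M4_mul hm0 hqk0 hcopq
  -- expansion of Mref4
  have expand : ∀ r : ℕ, r.Prime → ¬ r ∣ m →
      Mref4 (m * r ^ k) =
        (3 * (4:ℝ) ^ (m.primeFactorsList.length + k) / 16 +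
         2 * (3:ℝ) ^ (m.primeFactorsList.length + k) / 32 +
         (2:ℝ) ^ (m.primeFactorsList.length + k) / 72 +
         3 * (2:ℝ) ^ (m.primeFactorsList.length + k) / 96 + 53 / 5760) +
        ∑ v ∈ m.divisors, ∑ i ∈ Finset.range (k+1),
          (2:ℝ) ^ (v.primeFactors.card + (if i = 0 then 0 else 1) + 1) * (1/4) * (2/π) *
            (1 + (Real.log (v:ℝ) + (i:ℝ) * Real.log (r:ℝ))/2) *
            ((∏ s ∈ v.primeFactors.filter (fun s => m.factorization s = 2),
                2 * (s:ℝ) / (2 * (s:ℝ) - 1)) *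
             (if i ≠ 0 ∧ k = 2 then 2 * (r:ℝ) / (2 * (r:ℝ) - 1) else 1)) *
            ((∏ s ∈ v.primeFactors.filter (fun s => m.factorization s = 1),
                (1:ℝ)/2 * Real.sqrt (s:ℝ)) *
             (if i ≠ 0 ∧ k = 1 then 1/2 * Real.sqrt (r:ℝ) else 1)) := by
    intro r hr hrm
    have hrk0 : r ^ k ≠ 0 := pow_ne_zero _ hr.pos.ne'
    have hcopr : Nat.Coprime m (r ^ k) := (((hr.coprime_iff_not_dvd).mpr hrm).symm).pow_right k
    unfold Mref4
    rw [len_mul_pow hm0 hr k]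
    congr 1
    rw [sum_divisors_coprime _ hm0 hrk0 hcopr]
    refine Finset.sum_congr rfl fun v hv => ?_
    rw [Nat.sum_divisors_prime_pow hr]
    refine Finset.sum_congr rfl fun i hi => ?_
    have hvm : v ∣ m := (Nat.mem_divisors.1 hv).1
    have hv0 : v ≠ 0 := fun h => hm0 (Nat.eq_zero_of_zero_dvd (h ▸ hvm))
    have hrv : ¬ r ∣ v := fun h => hrm (h.trans hvm)
    have hlog : Real.log ((v * r ^ i : ℕ) : ℝ) = Real.log (v:ℝ) + (i:ℝ) * Real.log (r:ℝ) := by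
      push_cast
      rw [Real.log_mul (by exact_mod_cast hv0) (by
        have : (0:ℝ) < (r:ℝ) := by exact_mod_cast hr.pos
        positivity), Real.log_pow]
    rw [card_pf hv0 hr hrv, term_expand hr hm0 hrm hvm k i 2 _,
      term_expand hr hm0 hrm hvm k i 1 _, hlog]
  -- the key inequality
  have key : Mref4 (m * q ^ k) * (2160 * M4 (p ^ k))
      ≤ Mref4 (m * p ^ k) * (2160 * M4 (q ^ k)) := by
    rw [expand q hq hqm, expand p hp hpm]
    refine key_combine (by positivity) (G_mono hp hq hpq hk) ?_
    rw [Finset.sum_mul, Finset.sum_mul]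
    refine Finset.sum_le_sum fun v hv => ?_
    rw [Finset.sum_mul, Finset.sum_mul]
    refine Finset.sum_le_sum fun i hi => ?_
    have hv1 : 0 < v := Nat.pos_of_mem_divisors hv
    have hL : 0 ≤ Real.log (v:ℝ) := Real.log_nonneg (by exact_mod_cast hv1)
    have hik : i ≤ k := by have := Finset.mem_range.1 hi; omega
    have hP2 : 0 ≤ ∏ s ∈ v.primeFactors.filter (fun s => m.factorization s = 2),
        2 * (s:ℝ) / (2 * (s:ℝ) - 1) := by
      refine Finset.prod_nonneg fun s hs => ?_
      have hsp := Nat.prime_of_mem_primeFactors (Finset.mem_of_mem_filter s hs)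
      have h2 : (2:ℝ) ≤ (s:ℝ) := by exact_mod_cast hsp.two_le
      apply div_nonneg <;> linarith
    have hP1 : 0 ≤ ∏ s ∈ v.primeFactors.filter (fun s => m.factorization s = 1),
        (1:ℝ)/2 * Real.sqrt (s:ℝ) := by
      refine Finset.prod_nonneg fun s hs => ?_
      positivity
    have hW : (0:ℝ) ≤ (2:ℝ) ^ (v.primeFactors.card + (if i = 0 then 0 else 1) + 1) *
        (1/4) * (2/π) *
        (∏ s ∈ v.primeFactors.filter (fun s => m.factorization s = 2),
          2 * (s:ℝ) / (2 * (s:ℝ) - 1)) *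
        (∏ s ∈ v.primeFactors.filter (fun s => m.factorization s = 1),
          (1:ℝ)/2 * Real.sqrt (s:ℝ)) := by
      have hpi := Real.pi_pos
      exact mul_nonneg (mul_nonneg (mul_nonneg (mul_nonneg (by positivity) (by norm_num))
        (by positivity)) hP2) hP1
    have hcore := core hp hq hpq hk hik hL
    have h2 := mul_le_mul_of_nonneg_left hcore hW
    nlinarith [h2]
  rw [div_le_div_iff₀ (M4_pos _) (M4_pos _), hMd, hMd', hdm]
  calc Mref4 (m * q ^ k) * (2160 * M4 m * M4 (p ^ k))
      = (Mref4 (m * q ^ k) * (2160 * M4 (p ^ k))) * M4 m := by ring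
    _ ≤ (Mref4 (m * p ^ k) * (2160 * M4 (q ^ k))) * M4 m :=
        mul_le_mul_of_nonneg_right key (M4_pos m).le
    _ = Mref4 (m * p ^ k) * (2160 * M4 m * M4 (q ^ k)) := by ring
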